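/- arXiv:2209.13534 — 2 statements merged into one kernel-verified Lean document; each statement's English description precedes it below -/
import Mathlib

section
/- For any R-module M and submodules N₁, N₂ of M, with ν^s(N) = {K ∈ Spec^L(M) : Ann_R(N) ⊆ √(Ann_R(K))}, one has ν^s(N₁) ∪ ν^s(N₂) = ν^s(N₁ + N₂). -/
open Pointwise

section Defs
variable (R M : Type*) [CommRing R] [AddCommGroup M] [Module R M]

/-- A submodule `S` is second if `S ≠ 0` and for every `r : R`, `r • S = S` or `r • S = 0`. -/
def IsSecond (S : Submodule R M) : Prop :=
  S ≠ ⊥ ∧ ∀ r : R, r • S = S ∨ r • S = ⊥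

/-- A submodule `K` is secondary if `K ≠ 0` and for every `r : R`,
`r • K = K` or `r ^ n • K = 0` for some `n ≥ 1`. -/
def IsSecondary (K : Submodule R M) : Prop :=
  K ≠ ⊥ ∧ ∀ r : R, r • K = K ∨ ∃ n : ℕ, 0 < n ∧ r ^ n • K = ⊥

/-- The socle of a submodule `N`: the sum of all second submodules contained in `N`. -/
def soc (N : Submodule R M) : Submodule R M :=
  sSup {S : Submodule R M | IsSecond R M S ∧ S ≤ N}

/-- The secondary-like spectrum of `M`. -/
def SpecL : Set (Submodule R M) :=
  {K | IsSecondary R M K ∧ (soc R M K).annihilator = K.annihilator.radical}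

/-- The variety `ν^s(N)`. -/
def nuS (N : Submodule R M) : Set (Submodule R M) :=
  {K | K ∈ SpecL R M ∧ N.annihilator ≤ K.annihilator.radical}

/-- The variety `ν^{s*}(N)`. -/
def nuSStar (N : Submodule R M) : Set (Submodule R M) :=
  {K | K ∈ SpecL R M ∧ soc R M K ≤ N}

end Defs

variable {R M : Type*} [CommRing R] [AddCommGroup M] [Module R M]

theorem smul_eq_bot_iff_mem_ann (r : R) (K : Submodule R M) :
    r • K = ⊥ ↔ r ∈ K.annihilator := by
  rw [Submodule.mem_annihilator, eq_bot_iff]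
  constructor
  · intro h m hm; exact (Submodule.mem_bot R).mp (h (Submodule.smul_mem_pointwise_smul m r K hm))
  · intro h x hx
    obtain ⟨m, hm, rfl⟩ := Set.mem_smul_set.mp hx
    simp [h m hm]

theorem pow_smul_eq (a : R) (K : Submodule R M) (h : a • K = K) (n : ℕ) : a ^ n • K = K := by
  induction n with
  | zero => simp
  | succ n ih => rw [pow_succ, mul_smul, h, ih]

theorem rad_prime_of_secondary {K : Submodule R M} (h : IsSecondary R M K) :
    K.annihilator.radical.IsPrime := by
  constructor
  · intro htop
    have : (1 : R) ∈ K.annihilator.radical := htop ▸ Submodule.mem_top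
    obtain ⟨n, hn⟩ := this
    rw [one_pow, ← smul_eq_bot_iff_mem_ann] at hn
    exact h.1 (by simpa using hn)
  · intro a b hab
    rcases h.2 a with ha | ⟨n, _, hn⟩
    · right
      obtain ⟨m, hm⟩ := hab
      rw [← smul_eq_bot_iff_mem_ann, mul_pow, mul_comm, mul_smul, pow_smul_eq a K ha] at hm
      exact ⟨m, (smul_eq_bot_iff_mem_ann _ _).mp hm⟩
    · left
      exact ⟨n, (smul_eq_bot_iff_mem_ann _ _).mp hn⟩

theorem ann_sup (N₁ N₂ : Submodule R M) :
    (N₁ ⊔ N₂).annihilator = N₁.annihilator ⊓ N₂.annihilator := by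
  apply le_antisymm
  · exact le_inf (Submodule.annihilator_mono le_sup_left)
      (Submodule.annihilator_mono le_sup_right)
  · intro r hr
    rw [Submodule.mem_annihilator]
    intro m hm
    obtain ⟨x, hx, y, hy, rfl⟩ := Submodule.mem_sup.mp hm
    rw [smul_add, Submodule.mem_annihilator.mp hr.1 x hx,
      Submodule.mem_annihilator.mp hr.2 y hy, add_zero]


theorem nuS_sup (N₁ N₂ : Submodule R M) :
    nuS R M N₁ ∪ nuS R M N₂ = nuS R M (N₁ ⊔ N₂) := by
  ext K
  simp only [Set.mem_union, nuS, Set.mem_setOf_eq]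
  constructor
  · rintro (⟨h1, h2⟩ | ⟨h1, h2⟩) <;>
      exact ⟨h1, le_trans (Submodule.annihilator_mono (by simp)) h2⟩
  · rintro ⟨h1, h2⟩
    rw [ann_sup] at h2
    have hp := rad_prime_of_secondary h1.1
    rcases hp.mul_le.mp (le_trans Ideal.mul_le_inf h2) with h | h
    · exact Or.inl ⟨h1, h⟩
    · exact Or.inr ⟨h1, h⟩
end

section
/- For an R-module M and any subset Y of Spec^L(M), the closure of Y in the SL-topology equals ν^s(H(Y)), where H(Y) = Σ_{K∈Y} soc(K). In particular, Y is closed if and only if ν^s(H(Y)) = Y, and if M ∈ Y then Y is dense in Spec^L(M). -/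
open Pointwise

section Top
variable (R M : Type*) [CommRing R] [AddCommGroup M] [Module R M]

/-- The variety `ν^s(N)` viewed inside `Spec^L(M)`. -/
def nuS' (N : Submodule R M) : Set (SpecL R M) :=
  {K | N.annihilator ≤ (K : Submodule R M).annihilator.radical}

/-- The Zariski (SL-) topology on `Spec^L(M)`, whose closed sets are the `ν^s(N)`. -/
instance SLTopology : TopologicalSpace (SpecL R M) :=
  TopologicalSpace.generateFrom {U | ∃ N : Submodule R M, U = (nuS' R M N)ᶜ}

/-- The basic open set `E_r = Spec^L(M) \\ ν^s(Ann_M(r))`. -/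
def Eopen (r : R) : Set (SpecL R M) :=
  (nuS' R M (Submodule.torsionBy R M r))ᶜ

end Top

variable {R M : Type*} [CommRing R] [AddCommGroup M] [Module R M]

section Aux
variable {R M : Type*} [CommRing R] [AddCommGroup M] [Module R M]

lemma smul_submodule_eq_bot_iff {r : R} {K : Submodule R M} :
    r • K = ⊥ ↔ r ∈ K.annihilator := by
  rw [eq_bot_iff, Submodule.mem_annihilator]
  constructor
  · intro h n hn
    have : r • n ∈ r • K := Submodule.smul_mem_pointwise_smul n r K hn
    simpa using h this
  · intro h x hx
    have : x ∈ r • (K : Set M) := by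
      rw [← Submodule.coe_pointwise_smul]; exact hx
    obtain ⟨s, hs, rfl⟩ := this
    simpa using h s hs

lemma pow_smul_eq_self {r : R} {K : Submodule R M} (h : r • K = K) (n : ℕ) :
    r ^ n • K = K := by
  induction n with
  | zero => simp
  | succ n ih => rw [pow_succ, mul_smul, h, ih]

lemma radical_annihilator_isPrime {K : Submodule R M} (hK : IsSecondary R M K) :
    K.annihilator.radical.IsPrime := by
  constructor
  · simp only [ne_eq, Ideal.radical_eq_top]
    intro h
    apply hK.1
    rw [eq_bot_iff]
    intro x hx
    have h1 : (1 : R) ∈ K.annihilator := by rw [h]; trivial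
    simpa using Submodule.mem_annihilator.mp h1 x hx
  · intro a b hab
    by_cases ha : a ∈ K.annihilator.radical
    · exact Or.inl ha
    right
    obtain ⟨n, hn⟩ := Ideal.mem_radical_iff.mp hab
    have haK : a • K = K := by
      rcases hK.2 a with h | ⟨m, hm, h⟩
      · exact h
      · exact absurd (Ideal.mem_radical_iff.mpr ⟨m, smul_submodule_eq_bot_iff.mp h⟩) ha
    refine Ideal.mem_radical_iff.mpr ⟨n, smul_submodule_eq_bot_iff.mp ?_⟩
    calc b ^ n • K = b ^ n • (a ^ n • K) := by rw [pow_smul_eq_self haK]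
      _ = (a * b) ^ n • K := by rw [← mul_smul, mul_pow, mul_comm]
      _ = ⊥ := smul_submodule_eq_bot_iff.mpr hn

end Aux


theorem closure_eq_nuS'_H (Y : Set (SpecL R M)) :
    closure Y = nuS' R M (⨆ K ∈ Y, soc R M (K : Submodule R M)) ∧
    (IsClosed Y ↔ nuS' R M (⨆ K ∈ Y, soc R M (K : Submodule R M)) = Y) ∧
    (∀ hM : (⊤ : Submodule R M) ∈ SpecL R M,
      (⟨⊤, hM⟩ : SpecL R M) ∈ Y → Dense Y) := by
  classical
  set H : Submodule R M := ⨆ K ∈ Y, soc R M (K : Submodule R M) with hHdef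
  have hannH : ∀ a : R, a ∈ H.annihilator ↔
      ∀ K ∈ Y, a ∈ (soc R M (K : Submodule R M)).annihilator := by
    intro a
    simp only [hHdef, Submodule.annihilator_iSup, Submodule.mem_iInf]
  have hclosed : ∀ N : Submodule R M, IsClosed (nuS' R M N) := by
    intro N
    have : IsOpen ((nuS' R M N)ᶜ) :=
      TopologicalSpace.isOpen_generateFrom_of_mem ⟨N, rfl⟩
    simpa using this.isClosed_compl
  have hYsub : Y ⊆ nuS' R M H := by
    intro K hK
    have h1 : soc R M (K : Submodule R M) ≤ H :=
      le_iSup₂ (f := fun (K : SpecL R M) (_ : K ∈ Y) => soc R M (K : Submodule R M)) K hK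
    exact le_trans (Submodule.annihilator_mono h1) (le_of_eq K.2.2)
  have hB := TopologicalSpace.isTopologicalBasis_of_subbasis
      (t := SLTopology R M)
      (s := {U : Set (SpecL R M) | ∃ N : Submodule R M, U = (nuS' R M N)ᶜ}) rfl
  have hmain : closure Y = nuS' R M H := by
    refine le_antisymm (closure_minimal hYsub (hclosed H)) ?_
    intro K hK
    have hP : ((K : Submodule R M).annihilator.radical).IsPrime :=
      radical_annihilator_isPrime K.2.1
    rw [hB.mem_closure_iff]
    rintro o ⟨f, ⟨hf, hfS⟩, rfl⟩ hKo
    by_contra hempty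
    rw [Set.not_nonempty_iff_eq_empty] at hempty
    choose N hN using fun (U : Set (SpecL R M)) (hU : U ∈ f) => hfS hU
    have hKU : ∀ (U : Set (SpecL R M)) (hU : U ∈ f),
        ¬ (N U hU).annihilator ≤ (K : Submodule R M).annihilator.radical := by
      intro U hU hle
      have : K ∈ U := hKo U hU
      rw [hN U hU] at this
      exact this hle
    have hex : ∀ (U : Set (SpecL R M)) (hU : U ∈ f),
        ∃ a : R, a ∈ (N U hU).annihilator ∧
          a ∉ (K : Submodule R M).annihilator.radical := by
      intro U hU
      exact SetLike.not_le_iff_exists.mp (hKU U hU)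
    choose a ha1 ha2 using hex
    set t : Finset (Set (SpecL R M)) := hf.toFinset with ht
    have hmemt : ∀ U, U ∈ t ↔ U ∈ f := fun U => hf.mem_toFinset
    set g : {U // U ∈ t} → R := fun U => a U.1 ((hmemt U.1).mp U.2) with hg
    set p : R := ∏ U ∈ t.attach, g U with hp2
    have hpnot : p ∉ (K : Submodule R M).annihilator.radical := by
      intro hmem
      haveI := hP
      obtain ⟨U, _, hU⟩ := (Ideal.IsPrime.prod_mem_iff).mp hmem
      exact ha2 U.1 ((hmemt U.1).mp U.2) hU
    have hpH : p ∈ H.annihilator := by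
      rw [hannH]
      intro y hy
      have hynot : y ∉ ⋂₀ f := by
        intro hyin
        have : y ∈ ⋂₀ f ∩ Y := ⟨hyin, hy⟩
        rw [hempty] at this
        exact this
      obtain ⟨U, hUf, hyU⟩ := by
        simpa [Set.mem_sInter, not_forall] using hynot
      have hynuS : y ∈ nuS' R M (N U hUf) := by
        by_contra hcon
        exact hyU (by rw [hN U hUf]; exact hcon)
      have hley : (N U hUf).annihilator ≤
          (soc R M (y : Submodule R M)).annihilator := by
        rw [y.2.2]; exact hynuS
      have hUt : U ∈ t := (hmemt U).mpr hUf
      have hgmem : g ⟨U, hUt⟩ ∈ (soc R M (y : Submodule R M)).annihilator :=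
        hley (ha1 U _)
      have : p = g ⟨U, hUt⟩ * ∏ V ∈ t.attach.erase ⟨U, hUt⟩, g V :=
        (Finset.mul_prod_erase t.attach g (Finset.mem_attach t ⟨U, hUt⟩)).symm
      rw [this]
      exact Ideal.mul_mem_right _ _ hgmem
    exact hpnot (hK hpH)
  refine ⟨hmain, ?_, ?_⟩
  · constructor
    · intro hcl
      rw [← hmain, hcl.closure_eq]
    · intro heq
      rw [← heq]
      exact hclosed H
  · intro hM hmem
    rw [dense_iff_closure_eq, hmain]
    apply Set.eq_univ_of_forall
    intro K
    show H.annihilator ≤ (K : Submodule R M).annihilator.radical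
    have h1 : soc R M (⊤ : Submodule R M) ≤ H :=
      le_iSup₂ (f := fun (K : SpecL R M) (_ : K ∈ Y) => soc R M (K : Submodule R M))
        (⟨⊤, hM⟩ : SpecL R M) hmem
    calc H.annihilator ≤ (soc R M (⊤ : Submodule R M)).annihilator :=
          Submodule.annihilator_mono h1
      _ = (⊤ : Submodule R M).annihilator.radical := hM.2
      _ ≤ (K : Submodule R M).annihilator.radical :=
          Ideal.radical_mono (Submodule.annihilator_mono le_top)
end
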